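/- arXiv:1706.08250 — 2 statements merged into one kernel-verified Lean document; each statement's English description precedes it below -/
import Mathlib

section
/- For any nondecreasing sequence of critical values τ = (τ_1, …, τ_m) ∈ [0,1]^m, the false discovery rate of the step-down procedure SD(τ) satisfies FDR(SD(τ)) ≤ Σ_{i=1}^m max_{1 ≤ k ≤ m} F_i(τ_k)/k. -/
open MeasureTheory ProbabilityTheory Finset

/-- Number of rejections of the step-up procedure with critical values `τ 1, …, τ m`
(convention `τ 0 = 0`): the largest `k ∈ {0, …, m}` such that at least `k` of the
p-values are `≤ τ k`. -/
noncomputable def numRejSU (m : ℕ) (τ : ℕ → ℝ) (q : Fin m → ℝ) : ℕ :=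
  sSup {k | k ≤ m ∧ k ≤ (univ.filter (fun j => q j ≤ τ k)).card}

/-- Rejection set of the step-up procedure. -/
noncomputable def rejSU (m : ℕ) (τ : ℕ → ℝ) (q : Fin m → ℝ) : Finset (Fin m) :=
  univ.filter (fun i => q i ≤ τ (numRejSU m τ q))

/-- Number of rejections of the step-down procedure with critical values `τ 1, …, τ m`
(convention `τ 0 = 0`). -/
noncomputable def numRejSD (m : ℕ) (τ : ℕ → ℝ) (q : Fin m → ℝ) : ℕ :=
  sSup {k | k ≤ m ∧ ∀ k' ≤ k, k' ≤ (univ.filter (fun j => q j ≤ τ k')).card}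

/-- Rejection set of the step-down procedure. -/
noncomputable def rejSD (m : ℕ) (τ : ℕ → ℝ) (q : Fin m → ℝ) : Finset (Fin m) :=
  univ.filter (fun i => q i ≤ τ (numRejSD m τ q))

/-- False discovery proportion of a rejection set `R` w.r.t. the set of true nulls `H0`. -/
noncomputable def FDP (m : ℕ) (H0 R : Finset (Fin m)) : ℝ :=
  ((R ∩ H0).card : ℝ) / max (R.card : ℝ) 1

/-! If a true null `i` is rejected by the step-down procedure, which makes `N ≥ 1` rejections,
then lowering `p_i` to `0` does not change the procedure. So `N = K_i`, the number of rejections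
once `p_i` is replaced by `0`, and `FDP ≤ ∑_{i ∈ H_0} ∑_{k ≥ 1} 1{p_i ≤ τ_k, K_i = k} / k`.
As `K_i` is a function of the other p-values it is independent of `p_i`, so the `i`-th term has
expectation `∑_k P(p_i ≤ τ_k) P(K_i = k) / k ≤ max_k F_i(τ_k) / k`. -/

lemma ProbabilityTheory.iIndepFun.indepFun_comp_update {Ω ι β γ : Type*} [MeasurableSpace Ω]
    {P : Measure Ω} [Fintype ι] [DecidableEq ι] [MeasurableSpace β] [MeasurableSpace γ]
    {f : ι → Ω → β} (hf : iIndepFun f P) (hmeas : ∀ j, Measurable (f j)) (i : ι) (c : β)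
    {g : (ι → β) → γ} (hg : Measurable g) :
    IndepFun (f i) (fun ω => g (Function.update (fun j => f j ω) i c)) P := by
  have hsplit := hf.indepFun_finset {i} {i}ᶜ disjoint_compl_right hmeas
  let extend : (({i}ᶜ : Finset ι) → β) → ι → β := fun x j =>
    if h : j ∈ ({i}ᶜ : Finset ι) then x ⟨j, h⟩ else c
  have hextend : Measurable extend := measurable_pi_lambda _ fun j => by
    by_cases h : j ∈ ({i}ᶜ : Finset ι)
    · simp only [extend, dif_pos h]
      exact measurable_pi_apply _
    · simp only [extend, dif_neg h]
      exact measurable_const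
  convert hsplit.comp (measurable_pi_apply ⟨i, mem_singleton_self i⟩) (hg.comp hextend) using 1
  · rfl
  funext ω
  refine congrArg g (funext fun j => ?_)
  by_cases h : j = i <;> simp [extend, h]

lemma ProbabilityTheory.IndepFun.sum_measureReal_preimage_inter_le {Ω β κ : Type*}
    [MeasurableSpace Ω] {P : Measure Ω} [IsProbabilityMeasure P] [MeasurableSpace β]
    [MeasurableSpace κ] [MeasurableSingletonClass κ] {X : Ω → β} {K : Ω → κ}
    (hK : Measurable K) (hXK : IndepFun X K P) (s : Finset κ) {A : κ → Set β}
    (hA : ∀ k, MeasurableSet (A k)) {w : κ → ℝ} {M : ℝ} (hM : 0 ≤ M)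
    (hbound : ∀ k ∈ s, P.real (X ⁻¹' A k) * w k ≤ M) :
    ∑ k ∈ s, P.real (X ⁻¹' A k ∩ K ⁻¹' {k}) * w k ≤ M :=
  calc ∑ k ∈ s, P.real (X ⁻¹' A k ∩ K ⁻¹' {k}) * w k
      = ∑ k ∈ s, P.real (X ⁻¹' A k) * w k * P.real (K ⁻¹' {k}) := by
        refine sum_congr rfl fun k _ => ?_
        rw [measureReal_def, hXK.measure_inter_preimage_eq_mul _ _ (hA k)
          (measurableSet_singleton k), ENNReal.toReal_mul, ← measureReal_def, ← measureReal_def]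
        ring
    _ ≤ ∑ k ∈ s, M * P.real (K ⁻¹' {k}) :=
        sum_le_sum fun k hk => mul_le_mul_of_nonneg_right (hbound k hk) measureReal_nonneg
    _ = M * P.real (K ⁻¹' s) := by
        rw [← mul_sum,
          sum_measureReal_preimage_singleton s fun k _ => hK (measurableSet_singleton k)]
    _ ≤ M := mul_le_of_le_one_right hM measureReal_le_one

section StepDown

variable {m : ℕ} (τ : ℕ → ℝ)

lemma numRejSD_spec (q : Fin m → ℝ) :
    numRejSD m τ q ≤ m ∧
      ∀ k ≤ numRejSD m τ q, k ≤ (univ.filter fun j => q j ≤ τ k).card :=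
  Nat.sSup_mem (s := {n | n ≤ m ∧ ∀ k ≤ n, k ≤ (univ.filter fun j => q j ≤ τ k).card})
    ⟨0, Nat.zero_le m, fun k hk => by omega⟩ ⟨m, fun _ hk => hk.1⟩

lemma le_numRejSD_iff {q : Fin m → ℝ} {n : ℕ} :
    n ≤ numRejSD m τ q ↔ n ≤ m ∧ ∀ k ≤ n, k ≤ (univ.filter fun j => q j ≤ τ k).card := by
  refine ⟨fun hn => ?_, fun hn => le_csSup ⟨m, fun _ hk => hk.1⟩ hn⟩
  obtain ⟨hm, hcount⟩ := numRejSD_spec τ q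
  exact ⟨hn.trans hm, fun k hk => hcount k (hk.trans hn)⟩

lemma numRejSD_le_card_rejSD (q : Fin m → ℝ) : numRejSD m τ q ≤ (rejSD m τ q).card :=
  (numRejSD_spec τ q).2 _ le_rfl

lemma numRejSD_antitone : Antitone (numRejSD m τ) := by
  intro q q' hqq'
  refine (le_numRejSD_iff τ).2 ⟨(numRejSD_spec τ q').1, fun k hk => ?_⟩
  refine ((numRejSD_spec τ q').2 k hk).trans (card_le_card fun j => ?_)
  simp only [mem_filter, mem_univ, true_and]
  exact (hqq' j).trans

lemma numRejSD_pos_of_mem_rejSD (hτ : τ 0 ≤ τ 1) {q : Fin m → ℝ} {i : Fin m}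
    (hi : i ∈ rejSD m τ q) : 0 < numRejSD m τ q := by
  by_contra h
  have hN : numRejSD m τ q = 0 := by omega
  have hi₁ : q i ≤ τ 1 := by
    simp only [rejSD, mem_filter, mem_univ, true_and, hN] at hi
    exact hi.trans hτ
  have : 1 ≤ numRejSD m τ q := by
    refine (le_numRejSD_iff τ).2 ⟨i.pos, fun k hk => ?_⟩
    interval_cases k
    · exact Nat.zero_le _
    · exact card_pos.2 ⟨i, by simpa using hi₁⟩
  omega

lemma numRejSD_update_of_le (hτ : MonotoneOn τ (Set.Iic m)) {q : Fin m → ℝ} {i : Fin m}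
    {x : ℝ} (hx : x ≤ q i) (hi : i ∈ rejSD m τ q) :
    numRejSD m τ (Function.update q i x) = numRejSD m τ q := by
  set N := numRejSD m τ q
  have hqi : q i ≤ τ N := by simpa [rejSD] using hi
  refine le_antisymm ((le_numRejSD_iff τ).2 ⟨(numRejSD_spec τ _).1, fun k hk => ?_⟩)
    (numRejSD_antitone τ (update_le_self_iff.2 hx))
  rcases le_or_gt k N with hkN | hNk
  · exact (numRejSD_spec τ q).2 k hkN
  have hkm : k ≤ m := hk.trans (numRejSD_spec τ _).1
  refine ((numRejSD_spec τ _).2 k hk).trans (card_le_card fun j => ?_)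
  simp only [mem_filter, mem_univ, true_and]
  rcases eq_or_ne j i with rfl | hji
  · exact fun _ => hqi.trans (hτ (Set.mem_Iic.2 (numRejSD_spec τ q).1) (Set.mem_Iic.2 hkm) hNk.le)
  · simp [hji]

lemma FDP_rejSD_le (H0 : Finset (Fin m)) (hτ : MonotoneOn τ (Set.Iic m)) {q : Fin m → ℝ}
    (hq : 0 ≤ q) :
    FDP m H0 (rejSD m τ q) ≤ ∑ i ∈ H0, ∑ k ∈ Icc 1 m,
      if q i ≤ τ k ∧ numRejSD m τ (Function.update q i 0) = k then (k : ℝ)⁻¹ else 0 := by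
  set R := rejSD m τ q
  set N := numRejSD m τ q
  have hcharge : ∀ i ∈ R ∩ H0, (max (R.card : ℝ) 1)⁻¹ ≤ ∑ k ∈ Icc 1 m,
      if q i ≤ τ k ∧ numRejSD m τ (Function.update q i 0) = k then (k : ℝ)⁻¹ else 0 := by
    intro i hi
    set c : ℕ → ℝ := fun k =>
      if q i ≤ τ k ∧ numRejSD m τ (Function.update q i 0) = k then (k : ℝ)⁻¹ else 0
    have hiR := (mem_inter.1 hi).1
    have hm : 1 ≤ m := i.pos
    have hN : 1 ≤ N := numRejSD_pos_of_mem_rejSD τ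
      (hτ (Set.mem_Iic.2 (Nat.zero_le m)) (Set.mem_Iic.2 hm) zero_le_one) hiR
    have hNR : (N : ℝ) ≤ R.card := by exact_mod_cast numRejSD_le_card_rejSD τ q
    have hqi : q i ≤ τ N := by simpa [R, rejSD] using hiR
    calc (max (R.card : ℝ) 1)⁻¹ ≤ (N : ℝ)⁻¹ :=
          inv_anti₀ (by exact_mod_cast hN) (hNR.trans (le_max_left _ _))
      _ = c N := (if_pos ⟨hqi, numRejSD_update_of_le τ hτ (hq i) hiR⟩).symm
      _ ≤ ∑ k ∈ Icc 1 m, c k :=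
          single_le_sum (fun k _ => by positivity) (mem_Icc.2 ⟨hN, (numRejSD_spec τ q).1⟩)
  calc FDP m H0 R = ∑ i ∈ R ∩ H0, (max (R.card : ℝ) 1)⁻¹ := by
        rw [FDP, sum_const, nsmul_eq_mul, div_eq_mul_inv]
    _ ≤ _ := sum_le_sum hcharge
    _ ≤ _ := sum_le_sum_of_subset_of_nonneg inter_subset_right
        fun _ _ _ => sum_nonneg fun _ _ => by positivity

lemma measurable_numRejSD : Measurable (numRejSD m τ) := by
  refine measurable_of_Ici fun n => ?_
  have hcount : ∀ k, Measurable fun q : Fin m → ℝ => (univ.filter fun j => q j ≤ τ k).card :=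
    fun k => by
      simp_rw [card_filter]
      exact measurable_sum _ fun j _ =>
        Measurable.ite (measurableSet_le (measurable_pi_apply j) measurable_const)
          measurable_const measurable_const
  have hpre : numRejSD m τ ⁻¹' Set.Ici n =
      {_q | n ≤ m} ∩ ⋂ k ≤ n, {q | k ≤ (univ.filter fun j => q j ≤ τ k).card} := by
    ext q
    simp [le_numRejSD_iff]
  rw [hpre]
  exact (MeasurableSet.const _).inter <| .biInter (Set.to_countable _) fun k _ =>
    measurableSet_le measurable_const (hcount k)

lemma measurable_numRejSD_update {Ω : Type*} [MeasurableSpace Ω] {p : Fin m → Ω → ℝ}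
    (hmeas : ∀ i, Measurable (p i)) (i : Fin m) (x : ℝ) :
    Measurable fun ω => numRejSD m τ (Function.update (fun j => p j ω) i x) :=
  (measurable_numRejSD τ).comp (by fun_prop)

lemma integral_FDP_rejSD_le {Ω : Type*} [MeasurableSpace Ω] (P : Measure Ω)
    [IsProbabilityMeasure P] {p : Fin m → Ω → ℝ} (hmeas : ∀ i, Measurable (p i))
    (hp : ∀ i ω, 0 ≤ p i ω) (H0 : Finset (Fin m)) (hτ : MonotoneOn τ (Set.Iic m)) :
    ∫ ω, FDP m H0 (rejSD m τ fun j => p j ω) ∂P ≤ ∑ i ∈ H0, ∑ k ∈ Icc 1 m,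
      P.real (p i ⁻¹' Set.Iic (τ k) ∩
        (fun ω => numRejSD m τ (Function.update (fun j => p j ω) i 0)) ⁻¹' {k}) * (k : ℝ)⁻¹ := by
  set A : Fin m → ℕ → Set Ω := fun i k => p i ⁻¹' Set.Iic (τ k) ∩
    (fun ω => numRejSD m τ (Function.update (fun j => p j ω) i 0)) ⁻¹' {k}
  have hA : ∀ i k, MeasurableSet (A i k) := fun i k =>
    (hmeas i measurableSet_Iic).inter <|
      measurable_numRejSD_update τ hmeas i 0 (measurableSet_singleton k)
  have hint : ∀ i k, Integrable ((A i k).indicator fun _ => (k : ℝ)⁻¹) P :=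
    fun i k => (integrable_const _).indicator (hA i k)
  calc ∫ ω, FDP m H0 (rejSD m τ fun j => p j ω) ∂P
      ≤ ∫ ω, ∑ i ∈ H0, ∑ k ∈ Icc 1 m, (A i k).indicator (fun _ => (k : ℝ)⁻¹) ω ∂P := by
        refine integral_mono_of_nonneg (ae_of_all _ fun ω => by unfold FDP; positivity)
          (integrable_finsetSum _ fun i _ => integrable_finsetSum _ fun k _ => hint i k)
          (ae_of_all _ fun ω => (FDP_rejSD_le τ H0 hτ fun i => hp i ω).trans_eq ?_)
        classical
        simp only [A, Set.indicator_apply, Set.mem_inter_iff, Set.mem_preimage, Set.mem_Iic,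
          Set.mem_singleton_iff]
    _ = ∑ i ∈ H0, ∑ k ∈ Icc 1 m, P.real (A i k) * (k : ℝ)⁻¹ := by
        rw [integral_finsetSum _ fun i _ => integrable_finsetSum _ fun k _ => hint i k]
        refine sum_congr rfl fun i _ => ?_
        rw [integral_finsetSum _ fun k _ => hint i k]
        simp_rw [integral_indicator_const _ (hA i _), smul_eq_mul]

end StepDown

theorem fdr_sd_le_sum_max_general
    {Ω : Type*} [MeasurableSpace Ω] (P : Measure Ω) [IsProbabilityMeasure P]
    (m : ℕ) (hm : 1 ≤ m)
    (p : Fin m → Ω → ℝ) (hmeas : ∀ i, Measurable (p i))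
    (hp01 : ∀ i ω, p i ω ∈ Set.Icc (0 : ℝ) 1)
    (hindep : iIndepFun p P)
    (H0 : Finset (Fin m))
    (F : Fin m → ℝ → ℝ)
    (hFrange : ∀ i, ∀ t ∈ Set.Icc (0 : ℝ) 1, F i t ∈ Set.Icc (0 : ℝ) 1)
    (hnull : ∀ i ∈ H0, ∀ t ∈ Set.Icc (0 : ℝ) 1,
      P {ω | p i ω ≤ t} ≤ ENNReal.ofReal (F i t))
    (τ : ℕ → ℝ)
    (hτmono : ∀ k l, k ≤ l → l ≤ m → τ k ≤ τ l)
    (hτ01 : ∀ k ≤ m, τ k ∈ Set.Icc (0 : ℝ) 1)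
    :
    ∫ ω, FDP m H0 (rejSD m τ (fun j => p j ω)) ∂P
      ≤ ∑ i : Fin m, (Finset.Icc 1 m).sup' (Finset.nonempty_Icc.mpr hm)
          (fun k => F i (τ k) / (k : ℝ)) := by
  set M : Fin m → ℝ := fun i => (Icc 1 m).sup' (nonempty_Icc.mpr hm) fun k => F i (τ k) / k
  have hτ : MonotoneOn τ (Set.Iic m) := fun k _ l hl hkl => hτmono k l hkl hl
  have hM : ∀ i, 0 ≤ M i := fun i =>
    (div_nonneg (hFrange i _ (hτ01 1 hm)).1 (Nat.cast_nonneg (α := ℝ) 1)).trans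
      (le_sup' (fun k => F i (τ k) / k) (mem_Icc.2 ⟨le_rfl, hm⟩))
  have hlevel : ∀ i ∈ H0, ∀ k ∈ Icc 1 m, P.real (p i ⁻¹' Set.Iic (τ k)) * (k : ℝ)⁻¹ ≤ M i := by
    intro i hi k hk
    have hτk := hτ01 k (mem_Icc.1 hk).2
    calc P.real (p i ⁻¹' Set.Iic (τ k)) * (k : ℝ)⁻¹ ≤ F i (τ k) / k :=
          mul_le_mul_of_nonneg_right
            (ENNReal.toReal_le_of_le_ofReal (hFrange i _ hτk).1 (hnull i hi _ hτk)) (by positivity)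
      _ ≤ M i := le_sup' (fun k => F i (τ k) / k) hk
  calc ∫ ω, FDP m H0 (rejSD m τ fun j => p j ω) ∂P
      ≤ ∑ i ∈ H0, ∑ k ∈ Icc 1 m, P.real (p i ⁻¹' Set.Iic (τ k) ∩
          (fun ω => numRejSD m τ (Function.update (fun j => p j ω) i 0)) ⁻¹' {k}) * (k : ℝ)⁻¹ :=
        integral_FDP_rejSD_le τ P hmeas (fun i ω => (hp01 i ω).1) H0 hτ
    _ ≤ ∑ i ∈ H0, M i := sum_le_sum fun i hi =>
        IndepFun.sum_measureReal_preimage_inter_le (measurable_numRejSD_update τ hmeas i 0)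
          (hindep.indepFun_comp_update hmeas i 0 (measurable_numRejSD τ)) _
          (fun _ => measurableSet_Iic) (hM i) (hlevel i hi)
    _ ≤ ∑ i, M i := sum_le_sum_of_subset_of_nonneg (subset_univ _) fun i _ _ => hM i

/-- `FDR(SD(τ)) ≤ ∑_{i=1}^m max_{1 ≤ k ≤ m} F_i(τ_k)/k`. -/
theorem fdr_sd_le_sum_max
    {Ω : Type*} [MeasurableSpace Ω] (P : Measure Ω) [IsProbabilityMeasure P]
    (m : ℕ) (hm : 1 ≤ m)
    (p : Fin m → Ω → ℝ) (hmeas : ∀ i, Measurable (p i))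
    (hp01 : ∀ i ω, p i ω ∈ Set.Icc (0 : ℝ) 1)
    (hindep : iIndepFun p P)
    (H0 : Finset (Fin m))
    (F : Fin m → ℝ → ℝ)
    (hFmono : ∀ i, MonotoneOn (F i) (Set.Icc 0 1))
    (hFrange : ∀ i, ∀ t ∈ Set.Icc (0 : ℝ) 1, F i t ∈ Set.Icc (0 : ℝ) 1)
    (hF0 : ∀ i, F i 0 = 0) (hF1 : ∀ i, F i 1 = 1)
    (hnull : ∀ i ∈ H0, ∀ t ∈ Set.Icc (0 : ℝ) 1,
      P {ω | p i ω ≤ t} ≤ ENNReal.ofReal (F i t))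
    (τ : ℕ → ℝ) (hτ0 : τ 0 = 0)
    (hτmono : ∀ k l, k ≤ l → l ≤ m → τ k ≤ τ l)
    (hτ01 : ∀ k ≤ m, τ k ∈ Set.Icc (0 : ℝ) 1)
    :
    ∫ ω, FDP m H0 (rejSD m τ (fun j => p j ω)) ∂P
      ≤ ∑ i : Fin m, (Finset.Icc 1 m).sup' (Finset.nonempty_Icc.mpr hm)
          (fun k => F i (τ k) / (k : ℝ)) :=
  fdr_sd_le_sum_max_general P m hm p hmeas hp01 hindep H0 F hFrange hnull τ hτmono hτ01
end

section
/- For any nondecreasing sequence of critical values τ = (τ_1, …, τ_m) ∈ [0,1]^m such that F_i(τ_m) < 1 for all i, the false discovery rate of the step-up procedure SU(τ) satisfies FDR(SU(τ)) ≤ max_{1 ≤ k ≤ m} (1/k) · Σ_{i=1}^m F_i(τ_k)/(1 − F_i(τ_m)). -/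
/-!
For a true null `i`, let `Kᵢ` be the number of step-up rejections once `pᵢ` is replaced by `0`.
Then `i` is rejected iff `pᵢ ≤ τ_{Kᵢ}`, and in that case the procedure rejects exactly `Kᵢ`
hypotheses, so `FDP = ∑_{i ∈ H₀} 1{pᵢ ≤ τ_{Kᵢ}} / Kᵢ`. As `Kᵢ` is a function of the other
p-values, it is independent of `pᵢ`; conditioning on `Kᵢ = k` bounds the contribution of `i`
by `P(Kᵢ = k) Fᵢ(τ_k) / k`. Multiplying by `1 ≤ P(pᵢ > τ_m) / (1 - Fᵢ(τ_m))` and undoing the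
conditioning gives the expectation of `1{pᵢ > τ_m} Fᵢ(τ_{Kᵢ}) / (Kᵢ (1 - Fᵢ(τ_m)))`. Finally all
`Kᵢ` with `pᵢ > τ_m` coincide, since zeroing such a p-value raises every count `#{j | p_j ≤ τ_k}`,
`k ≤ m`, by exactly one; so the sum over `i` is pointwise at most the maximum over `k`.
-/

open MeasureTheory ProbabilityTheory Finset

section StepUp

variable {m : ℕ} {τ : ℕ → ℝ} {v : Fin m → ℝ}

noncomputable def countLE (τ : ℕ → ℝ) (k : ℕ) (v : Fin m → ℝ) : ℕ :=
  #{j | v j ≤ τ k}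

theorem numRejSU_eq_findGreatest (v : Fin m → ℝ) :
    numRejSU m τ v = Nat.findGreatest (fun k => k ≤ countLE τ k v) m := by
  apply le_antisymm
  · exact csSup_le ⟨0, by simp⟩ fun k hk => Nat.le_findGreatest hk.1 hk.2
  · exact le_csSup ⟨m, fun k hk => hk.1⟩
      ⟨Nat.findGreatest_le m,
        Nat.findGreatest_spec (P := fun k => k ≤ countLE τ k v) (Nat.zero_le m) (Nat.zero_le _)⟩

theorem numRejSU_le : numRejSU m τ v ≤ m := by
  rw [numRejSU_eq_findGreatest]
  exact Nat.findGreatest_le m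

theorem numRejSU_le_countLE : numRejSU m τ v ≤ countLE τ (numRejSU m τ v) v := by
  rw [numRejSU_eq_findGreatest]
  exact Nat.findGreatest_spec (P := fun k => k ≤ countLE τ k v) (Nat.zero_le m) (Nat.zero_le _)

theorem le_numRejSU {k : ℕ} (hkm : k ≤ m) (hk : k ≤ countLE τ k v) : k ≤ numRejSU m τ v := by
  rw [numRejSU_eq_findGreatest]
  exact Nat.le_findGreatest hkm hk

theorem countLE_le (k : ℕ) : countLE τ k v ≤ m := by
  simpa [countLE] using card_filter_le univ (fun j => v j ≤ τ k)

theorem countLE_mono {k l : ℕ} (h : τ k ≤ τ l) : countLE τ k v ≤ countLE τ l v :=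
  card_le_card fun j hj => by
    simp only [mem_filter, mem_univ, true_and] at hj ⊢
    exact hj.trans h

theorem mem_rejSU {i : Fin m} : i ∈ rejSU m τ v ↔ v i ≤ τ (numRejSU m τ v) := by
  simp [rejSU]

theorem card_rejSU (hτ : MonotoneOn τ (Set.Iic m)) : #(rejSU m τ v) = numRejSU m τ v := by
  change countLE τ (numRejSU m τ v) v = numRejSU m τ v
  refine le_antisymm ?_ numRejSU_le_countLE
  by_contra! hlt
  have hK : numRejSU m τ v < m := numRejSU_le.lt_of_ne (by grind [countLE_le])
  have : numRejSU m τ v + 1 ≤ numRejSU m τ v :=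
    le_numRejSU hK <| hlt.trans_le <| countLE_mono <|
      hτ (Set.mem_Iic.2 hK.le) (Set.mem_Iic.2 hK) (Nat.le_succ _)
  omega

end StepUp

section LeaveOneOut

variable {m : ℕ} {τ : ℕ → ℝ} {v : Fin m → ℝ} {i : Fin m}

theorem countLE_le_countLE_update (hvi : 0 ≤ v i) (k : ℕ) :
    countLE τ k v ≤ countLE τ k (Function.update v i 0) :=
  card_le_card fun j hj => by
    simp only [mem_filter, mem_univ, true_and] at hj ⊢
    rcases eq_or_ne j i with rfl | hne
    · simpa using hvi.trans hj
    · rwa [Function.update_of_ne hne]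

theorem countLE_update_eq_of_le {k : ℕ} (hvi : 0 ≤ v i) (h : v i ≤ τ k) :
    countLE τ k (Function.update v i 0) = countLE τ k v := by
  unfold countLE
  congr 1
  ext j
  rcases eq_or_ne j i with rfl | hne
  · simp [h, hvi.trans h]
  · simp [Function.update_of_ne hne]

theorem countLE_update_eq_of_lt {k : ℕ} (h0 : 0 ≤ τ k) (h : τ k < v i) :
    countLE τ k (Function.update v i 0) = countLE τ k v + 1 := by
  unfold countLE
  rw [← card_insert_of_notMem (a := i) (by simpa using h)]
  congr 1
  ext j
  rcases eq_or_ne j i with rfl | hne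
  · simpa using h0
  · simp [hne]

theorem numRejSU_le_numRejSU_update (hvi : 0 ≤ v i) :
    numRejSU m τ v ≤ numRejSU m τ (Function.update v i 0) := by
  simp only [numRejSU_eq_findGreatest]
  exact Nat.findGreatest_mono_left (fun k hk => hk.trans (countLE_le_countLE_update hvi k)) m

theorem numRejSU_update_eq_of_le_update (hvi : 0 ≤ v i)
    (h : v i ≤ τ (numRejSU m τ (Function.update v i 0))) :
    numRejSU m τ (Function.update v i 0) = numRejSU m τ v := by
  refine le_antisymm (le_numRejSU numRejSU_le ?_) (numRejSU_le_numRejSU_update hvi)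
  exact numRejSU_le_countLE.trans (countLE_update_eq_of_le hvi h).le

theorem numRejSU_update_eq_of_le (hτ : MonotoneOn τ (Set.Iic m)) (hvi : 0 ≤ v i)
    (h : v i ≤ τ (numRejSU m τ v)) :
    numRejSU m τ (Function.update v i 0) = numRejSU m τ v :=
  numRejSU_update_eq_of_le_update hvi <| h.trans <|
    hτ numRejSU_le numRejSU_le (numRejSU_le_numRejSU_update hvi)

theorem mem_rejSU_iff_le_update (hτ : MonotoneOn τ (Set.Iic m)) (hvi : 0 ≤ v i) :
    i ∈ rejSU m τ v ↔ v i ≤ τ (numRejSU m τ (Function.update v i 0)) := by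
  rw [mem_rejSU]
  constructor
  · intro h
    rwa [numRejSU_update_eq_of_le hτ hvi h]
  · intro h
    rwa [← numRejSU_update_eq_of_le_update hvi h]

theorem one_le_numRejSU_update (hm : 1 ≤ m) (hτ1 : 0 ≤ τ 1) :
    1 ≤ numRejSU m τ (Function.update v i 0) :=
  le_numRejSU hm <| card_pos.2 ⟨i, by simp [hτ1]⟩

theorem numRejSU_update_le_update_of_lt (hτ_nonneg : ∀ k ≤ m, 0 ≤ τ k) (hτm : ∀ k ≤ m, τ k ≤ τ m)
    {j : Fin m} (hi : τ m < v i) (hj : τ m < v j) :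
    numRejSU m τ (Function.update v i 0) ≤ numRejSU m τ (Function.update v j 0) := by
  have hK := numRejSU_le (τ := τ) (v := Function.update v i 0)
  refine le_numRejSU hK (numRejSU_le_countLE.trans_eq ?_)
  rw [countLE_update_eq_of_lt (hτ_nonneg _ hK) ((hτm _ hK).trans_lt hi),
    countLE_update_eq_of_lt (hτ_nonneg _ hK) ((hτm _ hK).trans_lt hj)]

end LeaveOneOut

section Decomposition

variable {m : ℕ} {τ : ℕ → ℝ} {v : Fin m → ℝ}

theorem FDP_rejSU_eq_sum (hτ : MonotoneOn τ (Set.Iic m)) (hv : ∀ j, 0 ≤ v j)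
    (H0 : Finset (Fin m)) :
    FDP m H0 (rejSU m τ v) = ∑ i ∈ H0,
      if v i ≤ τ (numRejSU m τ (Function.update v i 0)) then
        (numRejSU m τ (Function.update v i 0) : ℝ)⁻¹ else 0 := by
  rw [FDP, inter_comm, ← filter_mem_eq_inter, card_filter, Nat.cast_sum, sum_div]
  refine sum_congr rfl fun i _ => ?_
  by_cases hi : i ∈ rejSU m τ v
  · have hpos : (1 : ℝ) ≤ #(rejSU m τ v) := by exact_mod_cast card_pos.2 ⟨i, hi⟩
    rw [if_pos hi, if_pos ((mem_rejSU_iff_le_update hτ (hv i)).1 hi),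
      numRejSU_update_eq_of_le hτ (hv i) (mem_rejSU.1 hi), max_eq_left hpos, card_rejSU hτ]
    simp
  · rw [if_neg hi, if_neg (mt (mem_rejSU_iff_le_update hτ (hv i)).2 hi), Nat.cast_zero, zero_div]

theorem sum_ite_lt_le_sup' (hm : 1 ≤ m) (hτ_nonneg : ∀ k ≤ m, 0 ≤ τ k) (hτm : ∀ k ≤ m, τ k ≤ τ m)
    (H0 : Finset (Fin m)) (c : Fin m → ℕ → ℝ) (hc : ∀ i, ∀ k ∈ Icc 1 m, 0 ≤ c i k) :
    ∑ i ∈ H0, (if τ m < v i then c i (numRejSU m τ (Function.update v i 0)) else 0)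
      ≤ (Icc 1 m).sup' (nonempty_Icc.mpr hm) (fun k => ∑ i, c i k) := by
  by_cases h : ∃ j, τ m < v j
  · obtain ⟨j, hj⟩ := h
    set K := numRejSU m τ (Function.update v j 0)
    have hK : K ∈ Icc 1 m := mem_Icc.2 ⟨one_le_numRejSU_update hm (hτ_nonneg 1 hm), numRejSU_le⟩
    calc ∑ i ∈ H0, (if τ m < v i then c i (numRejSU m τ (Function.update v i 0)) else 0)
        ≤ ∑ i ∈ H0, c i K := sum_le_sum fun i _ => by
          split_ifs with hi
          · rw [le_antisymm (numRejSU_update_le_update_of_lt hτ_nonneg hτm hi hj)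
              (numRejSU_update_le_update_of_lt hτ_nonneg hτm hj hi)]
          · exact hc i K hK
      _ ≤ ∑ i, c i K := sum_le_sum_of_subset_of_nonneg (subset_univ _) fun i _ _ => hc i K hK
      _ ≤ _ := le_sup' (fun k => ∑ i, c i k) hK
  · simp only [not_exists, not_lt] at h
    calc ∑ i ∈ H0, (if τ m < v i then c i (numRejSU m τ (Function.update v i 0)) else 0)
        = 0 := sum_eq_zero fun i _ => if_neg (h i).not_gt
      _ ≤ ∑ i, c i 1 := sum_nonneg fun i _ => hc i 1 (mem_Icc.2 ⟨le_rfl, hm⟩)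
      _ ≤ _ := le_sup' (fun k => ∑ i, c i k) (mem_Icc.2 ⟨le_rfl, hm⟩)

end Decomposition

theorem measurable_countLE {m : ℕ} (τ : ℕ → ℝ) (k : ℕ) :
    Measurable (countLE (m := m) τ k) := by
  change Measurable fun v : Fin m → ℝ => #{j | v j ≤ τ k}
  simp only [card_filter]
  exact Finset.measurable_sum _ fun j _ =>
    Measurable.ite (measurableSet_le (measurable_pi_apply j) measurable_const)
      measurable_const measurable_const

theorem measurable_numRejSU (m : ℕ) (τ : ℕ → ℝ) : Measurable (numRejSU m τ) := by
  rw [show numRejSU m τ = fun v => Nat.findGreatest (fun k => k ≤ countLE τ k v) m from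
    funext numRejSU_eq_findGreatest]
  exact measurable_findGreatest fun k _ => measurable_countLE τ k MeasurableSet.of_discrete

namespace ProbabilityTheory

theorem iIndepFun.indepFun_update {Ω ι β : Type*} [MeasurableSpace Ω] {P : Measure Ω}
    [Fintype ι] [DecidableEq ι] [MeasurableSpace β] {f : ι → Ω → β} (h : iIndepFun f P)
    (hf : ∀ i, Measurable (f i)) (i : ι) (b : β) :
    IndepFun (f i) (fun ω => Function.update (fun j => f j ω) i b) P := by
  have := (h.indepFun_finset {i} {i}ᶜ disjoint_compl_right hf).comp
    (measurable_pi_apply (⟨i, mem_singleton_self i⟩ : ({i} : Finset ι)))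
    (measurable_updateFinset (x := fun _ => b))
  convert this using 1
  · rfl
  · funext ω j
    by_cases hj : j = i <;> simp [Function.updateFinset, hj]

end ProbabilityTheory

section IndependentPair

variable {Ω β : Type*} {X : Ω → β} {K : Ω → ℕ} {s : Finset ℕ}
  (r : β → ℕ → Prop) [∀ x k, Decidable (r x k)]

theorem ite_comp_eq_sum_indicator (hKs : ∀ ω, K ω ∈ s) (c : ℕ → ℝ) :
    (fun ω => if r (X ω) (K ω) then c (K ω) else 0)
      = fun ω => ∑ k ∈ s, ({ω | K ω = k} ∩ {ω | r (X ω) k}).indicator (fun _ => c k) ω := by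
  funext ω
  rw [sum_eq_single_of_mem (K ω) (hKs ω)]
  · by_cases h : r (X ω) (K ω) <;> simp [h]
  · intro k _ hk
    exact Set.indicator_of_notMem (fun hω => hk hω.1.symm) _

variable [MeasurableSpace Ω] [MeasurableSpace β] {P : Measure Ω} [IsFiniteMeasure P]

theorem integrable_ite_comp (hX : Measurable X) (hK : Measurable K)
    (hr : ∀ k, MeasurableSet {x | r x k}) (hKs : ∀ ω, K ω ∈ s) (c : ℕ → ℝ) :
    Integrable (fun ω => if r (X ω) (K ω) then c (K ω) else 0) P := by
  rw [ite_comp_eq_sum_indicator r hKs]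
  exact integrable_finsetSum _ fun k _ =>
    (integrable_const _).indicator ((hK (measurableSet_singleton k)).inter (hX (hr k)))

theorem integral_ite_comp_of_indepFun (hXK : IndepFun X K P) (hX : Measurable X)
    (hK : Measurable K) (hr : ∀ k, MeasurableSet {x | r x k}) (hKs : ∀ ω, K ω ∈ s)
    (c : ℕ → ℝ) :
    ∫ ω, (if r (X ω) (K ω) then c (K ω) else 0) ∂P
      = ∑ k ∈ s, P.real {ω | K ω = k} * P.real {ω | r (X ω) k} * c k := by
  have hmeas : ∀ k, MeasurableSet ({ω | K ω = k} ∩ {ω | r (X ω) k}) := fun k =>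
    (hK (measurableSet_singleton k)).inter (hX (hr k))
  rw [ite_comp_eq_sum_indicator r hKs,
    integral_finsetSum _ fun k _ => (integrable_const _).indicator (hmeas k)]
  refine sum_congr rfl fun k _ => ?_
  rw [integral_indicator_const _ (hmeas k),
    smul_eq_mul, Set.inter_comm, measureReal_def, measureReal_def, measureReal_def,
    ← ENNReal.toReal_mul, mul_comm (P _)]
  exact congrArg (fun x => x.toReal * c k)
    (hXK.measure_inter_preimage_eq_mul _ _ (hr k) (measurableSet_singleton k))

end IndependentPair

theorem integral_ite_le_le_integral_ite_lt {Ω : Type*} [MeasurableSpace Ω] {P : Measure Ω}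
    [IsProbabilityMeasure P] {X : Ω → ℝ} {K : Ω → ℕ} {s : Finset ℕ} (hXK : IndepFun X K P)
    (hX : Measurable X) (hK : Measurable K) (hKs : ∀ ω, K ω ∈ s) (τ : ℕ → ℝ) (t : ℝ)
    (a : ℕ → ℝ) (b : ℝ) (ha : ∀ k ∈ s, P.real {ω | X ω ≤ τ k} ≤ a k) (ha0 : ∀ k ∈ s, 0 ≤ a k)
    (hb : P.real {ω | X ω ≤ t} ≤ b) (hb1 : b < 1) :
    ∫ ω, (if X ω ≤ τ (K ω) then ((K ω : ℝ))⁻¹ else 0) ∂P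
      ≤ ∫ ω, (if t < X ω then 1 / (K ω : ℝ) * (a (K ω) / (1 - b)) else 0) ∂P := by
  rw [integral_ite_comp_of_indepFun (fun x k => x ≤ τ k) hXK hX hK (fun _ => measurableSet_Iic)
      hKs (fun k => (k : ℝ)⁻¹), integral_ite_comp_of_indepFun (fun x _ => t < x) hXK hX hK
      (fun _ => measurableSet_Ioi) hKs (fun k => 1 / (k : ℝ) * (a k / (1 - b)))]
  have htail : 1 - b ≤ P.real {ω | t < X ω} := by
    rw [show {ω | t < X ω} = {ω | X ω ≤ t}ᶜ by ext; simp,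
      probReal_compl_eq_one_sub (measurableSet_le hX measurable_const)]
    linarith
  refine sum_le_sum fun k hk => ?_
  have hk' : P.real {ω | X ω ≤ τ k} ≤ P.real {ω | t < X ω} * (a k / (1 - b)) :=
    calc P.real {ω | X ω ≤ τ k} ≤ a k := ha k hk
      _ ≤ P.real {ω | t < X ω} * (a k / (1 - b)) := by
        rw [mul_div_assoc', le_div_iff₀ (by linarith)]
        nlinarith [ha0 k hk]
  calc P.real {ω | K ω = k} * P.real {ω | X ω ≤ τ k} * (k : ℝ)⁻¹
      = P.real {ω | K ω = k} * (k : ℝ)⁻¹ * P.real {ω | X ω ≤ τ k} := by ring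
    _ ≤ P.real {ω | K ω = k} * (k : ℝ)⁻¹ * (P.real {ω | t < X ω} * (a k / (1 - b))) :=
        mul_le_mul_of_nonneg_left hk' (by positivity)
    _ = _ := by ring

section PValues

variable {Ω : Type*} [MeasurableSpace Ω] {P : Measure Ω} [IsProbabilityMeasure P] {m : ℕ}
  {τ : ℕ → ℝ} {p : Fin m → Ω → ℝ}

theorem measurable_numRejSU_update (hmeas : ∀ i, Measurable (p i)) (i : Fin m) :
    Measurable fun ω => numRejSU m τ (Function.update (fun j => p j ω) i 0) :=
  (measurable_numRejSU m τ).comp (by fun_prop)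

theorem integral_FDP_rejSU_le_sum (hm : 1 ≤ m) (hmeas : ∀ i, Measurable (p i))
    (hp : ∀ i ω, 0 ≤ p i ω) (hindep : iIndepFun p P) (hτ : MonotoneOn τ (Set.Iic m))
    (hτ_nonneg : ∀ k ≤ m, 0 ≤ τ k) (H0 : Finset (Fin m)) (F : Fin m → ℝ → ℝ)
    (hnull : ∀ i ∈ H0, ∀ k ≤ m, P.real {ω | p i ω ≤ τ k} ≤ F i (τ k))
    (hF0 : ∀ i, ∀ k ≤ m, 0 ≤ F i (τ k)) (hFm : ∀ i, F i (τ m) < 1) :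
    ∫ ω, FDP m H0 (rejSU m τ (fun j => p j ω)) ∂P ≤ ∑ i ∈ H0, ∫ ω,
      (if τ m < p i ω then 1 / (numRejSU m τ (Function.update (fun j => p j ω) i 0) : ℝ) *
        (F i (τ (numRejSU m τ (Function.update (fun j => p j ω) i 0))) / (1 - F i (τ m)))
      else 0) ∂P := by
  have hKs : ∀ i ω, numRejSU m τ (Function.update (fun j => p j ω) i 0) ∈ Icc 1 m := fun i ω =>
    mem_Icc.2 ⟨one_le_numRejSU_update hm (hτ_nonneg 1 hm), numRejSU_le⟩
  simp only [FDP_rejSU_eq_sum hτ (fun j => hp j _)]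
  rw [integral_finsetSum _ fun i _ => integrable_ite_comp (fun x k => x ≤ τ k) (hmeas i)
    (measurable_numRejSU_update hmeas i) (fun _ => measurableSet_Iic) (hKs i) (fun k => (k : ℝ)⁻¹)]
  exact sum_le_sum fun i hi => integral_ite_le_le_integral_ite_lt
    ((hindep.indepFun_update hmeas i 0).comp measurable_id (measurable_numRejSU m τ)) (hmeas i)
    (measurable_numRejSU_update hmeas i) (hKs i) τ (τ m) _ _
    (fun k hk => hnull i hi k (mem_Icc.1 hk).2) (fun k hk => hF0 i k (mem_Icc.1 hk).2)
    (hnull i hi m le_rfl) (hFm i)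

theorem sum_integral_ite_lt_le_sup' (hm : 1 ≤ m) (hmeas : ∀ i, Measurable (p i))
    (hτ_nonneg : ∀ k ≤ m, 0 ≤ τ k) (hτm : ∀ k ≤ m, τ k ≤ τ m) (H0 : Finset (Fin m))
    (c : Fin m → ℕ → ℝ) (hc : ∀ i, ∀ k ∈ Icc 1 m, 0 ≤ c i k) :
    ∑ i ∈ H0, ∫ ω, (if τ m < p i ω then
        c i (numRejSU m τ (Function.update (fun j => p j ω) i 0)) else 0) ∂P
      ≤ (Icc 1 m).sup' (nonempty_Icc.mpr hm) (fun k => ∑ i, c i k) := by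
  have hint : ∀ i, Integrable (fun ω => if τ m < p i ω then
      c i (numRejSU m τ (Function.update (fun j => p j ω) i 0)) else 0) P := fun i =>
    integrable_ite_comp (fun x _ => τ m < x) (hmeas i) (measurable_numRejSU_update hmeas i)
      (fun _ => measurableSet_Ioi) (fun _ => mem_range.2 (Nat.lt_succ_of_le numRejSU_le)) (c i)
  rw [← integral_finsetSum _ fun i _ => hint i]
  refine (integral_mono (integrable_finsetSum _ fun i _ => hint i) (integrable_const _)
    fun ω => sum_ite_lt_le_sup' hm hτ_nonneg hτm H0 c hc).trans_eq ?_
  simp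

end PValues

theorem fdr_su_le_nonadaptive_bound_general
    {Ω : Type*} [MeasurableSpace Ω] (P : Measure Ω) [IsProbabilityMeasure P]
    (m : ℕ) (hm : 1 ≤ m)
    (p : Fin m → Ω → ℝ) (hmeas : ∀ i, Measurable (p i))
    (hp01 : ∀ i ω, p i ω ∈ Set.Icc (0 : ℝ) 1)
    (hindep : iIndepFun p P)
    (H0 : Finset (Fin m))
    (F : Fin m → ℝ → ℝ)
    (hFrange : ∀ i, ∀ t ∈ Set.Icc (0 : ℝ) 1, F i t ∈ Set.Icc (0 : ℝ) 1)
    (hnull : ∀ i ∈ H0, ∀ t ∈ Set.Icc (0 : ℝ) 1,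
      P {ω | p i ω ≤ t} ≤ ENNReal.ofReal (F i t))
    (τ : ℕ → ℝ)
    (hτmono : ∀ k l, k ≤ l → l ≤ m → τ k ≤ τ l)
    (hτ01 : ∀ k ≤ m, τ k ∈ Set.Icc (0 : ℝ) 1)
    (hFτm : ∀ i, F i (τ m) < 1) :
    ∫ ω, FDP m H0 (rejSU m τ (fun j => p j ω)) ∂P
      ≤ (Finset.Icc 1 m).sup' (Finset.nonempty_Icc.mpr hm)
          (fun k => (1 / (k : ℝ)) * ∑ i : Fin m, F i (τ k) / (1 - F i (τ m))) := by
  have hτ : MonotoneOn τ (Set.Iic m) := fun k _ l hl hkl => hτmono k l hkl hl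
  have hτ_nonneg : ∀ k ≤ m, 0 ≤ τ k := fun k hk => (hτ01 k hk).1
  have hF0 : ∀ i, ∀ k ≤ m, 0 ≤ F i (τ k) := fun i k hk => (hFrange i _ (hτ01 k hk)).1
  have hnull' : ∀ i ∈ H0, ∀ k ≤ m, P.real {ω | p i ω ≤ τ k} ≤ F i (τ k) := fun i hi k hk =>
    ENNReal.toReal_le_of_le_ofReal (hF0 i k hk) (hnull i hi _ (hτ01 k hk))
  calc ∫ ω, FDP m H0 (rejSU m τ (fun j => p j ω)) ∂P
      ≤ _ := integral_FDP_rejSU_le_sum hm hmeas (fun i ω => (hp01 i ω).1) hindep hτ hτ_nonneg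
        H0 F hnull' hF0 hFτm
    _ ≤ (Icc 1 m).sup' (nonempty_Icc.mpr hm)
          (fun k => ∑ i, 1 / (k : ℝ) * (F i (τ k) / (1 - F i (τ m)))) :=
        sum_integral_ite_lt_le_sup' hm hmeas hτ_nonneg (fun k hk => hτmono k m hk le_rfl) H0
          (fun i k => 1 / (k : ℝ) * (F i (τ k) / (1 - F i (τ m)))) fun i k hk =>
            have := hF0 i k (mem_Icc.1 hk).2
            have := hFτm i
            by positivity
    _ = _ := by simp only [mul_sum]

/-- non-adaptive heterogeneous FDR bound for the step-up procedure. -/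
theorem fdr_su_le_nonadaptive_bound
    {Ω : Type*} [MeasurableSpace Ω] (P : Measure Ω) [IsProbabilityMeasure P]
    (m : ℕ) (hm : 1 ≤ m)
    (p : Fin m → Ω → ℝ) (hmeas : ∀ i, Measurable (p i))
    (hp01 : ∀ i ω, p i ω ∈ Set.Icc (0 : ℝ) 1)
    (hindep : iIndepFun p P)
    (H0 : Finset (Fin m))
    (F : Fin m → ℝ → ℝ)
    (hFmono : ∀ i, MonotoneOn (F i) (Set.Icc 0 1))
    (hFrange : ∀ i, ∀ t ∈ Set.Icc (0 : ℝ) 1, F i t ∈ Set.Icc (0 : ℝ) 1)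
    (hF0 : ∀ i, F i 0 = 0) (hF1 : ∀ i, F i 1 = 1)
    (hnull : ∀ i ∈ H0, ∀ t ∈ Set.Icc (0 : ℝ) 1,
      P {ω | p i ω ≤ t} ≤ ENNReal.ofReal (F i t))
    (τ : ℕ → ℝ) (hτ0 : τ 0 = 0)
    (hτmono : ∀ k l, k ≤ l → l ≤ m → τ k ≤ τ l)
    (hτ01 : ∀ k ≤ m, τ k ∈ Set.Icc (0 : ℝ) 1)
    (hFτm : ∀ i, F i (τ m) < 1) :
    ∫ ω, FDP m H0 (rejSU m τ (fun j => p j ω)) ∂P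
      ≤ (Finset.Icc 1 m).sup' (Finset.nonempty_Icc.mpr hm)
          (fun k => (1 / (k : ℝ)) * ∑ i : Fin m, F i (τ k) / (1 - F i (τ m))) :=
  fdr_su_le_nonadaptive_bound_general P m hm p hmeas hp01 hindep H0 F hFrange hnull τ hτmono hτ01
    hFτm
end
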